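/- arXiv:0909.1859 — 3 statements merged into one kernel-verified Lean document; each statement's English description precedes it below -/
import Mathlib

section
/- Let A, B, C, D be four affinely independent points in Euclidean 3-space such that the four triangles ABC, ABD, ACD, BCD all have the same area. Then every two opposite edges of the simplex ABCD have the same length: dist A B = dist C D, dist A C = dist B D, and dist A D = dist B C. -/
/-!
Put `p = (C + D - A - B) / 2`, `q = (B + D - A - C) / 2`, `r = (B + C - A - D) / 2`, the vectors
joining the midpoints of opposite edges, so that `B - A = q + r`, `C - A = p + r`, `D - A = p + q`.
Opposite edges are then `q ± r`, `p ± r`, `p ± q`, and the claim says that `p, q, r` are pairwise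
orthogonal. Four times a squared face area is a Gram determinant, quadratic in the Gram entries
`P = ⟪p, p⟫, …, a = ⟪q, r⟫, b = ⟪p, r⟫, c = ⟪p, q⟫`; equal face areas give
`P a = b c`, `Q b = a c`, `R c = a b`. Then `t = a b c = P a² = Q b² = R c²` satisfies
`t³ = P Q R t²`, while strict Cauchy–Schwarz gives `t < P Q R`; hence `t = 0` and `a = b = c = 0`.
-/

/-- The area of the triangle `XYZ`: half the product of the lengths of the
sides `XY`, `XZ` and the sine of the angle at `X`. -/
noncomputable def triArea (X Y Z : EuclideanSpace ℝ (Fin 3)) : ℝ :=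
  dist X Y * dist X Z * Real.sin (EuclideanGeometry.angle Y X Z) / 2

open scoped RealInnerProductSpace

lemma eq_zero_of_mul_eq_mul_cyclic {P Q R a b c : ℝ} (hP : 0 < P) (hQ : 0 < Q) (hR : 0 < R)
    (ha : a * a < Q * R) (e₁ : P * a = b * c) (e₂ : Q * b = a * c) (e₃ : R * c = a * b) :
    a = 0 ∧ b = 0 ∧ c = 0 := by
  have ht₁ : P * a ^ 2 = a * b * c := by linear_combination a * e₁
  have ht₂ : Q * b ^ 2 = a * b * c := by linear_combination b * e₂
  have ht₃ : R * c ^ 2 = a * b * c := by linear_combination c * e₃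
  have hcube : (a * b * c) ^ 2 * (P * Q * R - a * b * c) = 0 := by
    linear_combination (Q * b ^ 2 * R * c ^ 2) * ht₁ + (a * b * c * R * c ^ 2) * ht₂
      + (a * b * c) ^ 2 * ht₃
  have hlt : a * b * c < P * Q * R := by
    rw [← ht₁]
    nlinarith
  have ht : a * b * c = 0 := by
    simpa [sub_ne_zero.2 hlt.ne'] using hcube
  rw [ht] at ht₁ ht₂ ht₃
  exact ⟨by simpa [hP.ne'] using ht₁, by simpa [hQ.ne'] using ht₂, by simpa [hR.ne'] using ht₃⟩

section GramDet

variable {V : Type*} [NormedAddCommGroup V] [InnerProductSpace ℝ V]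

def gramDet (x y : V) : ℝ := ⟪x, x⟫ * ⟪y, y⟫ - ⟪x, y⟫ * ⟪x, y⟫

lemma gramDet_nonneg (x y : V) : 0 ≤ gramDet x y :=
  sub_nonneg.2 (real_inner_mul_inner_self_le x y)

lemma gramDet_pos {x y : V} (h : LinearIndependent ℝ ![x, y]) : 0 < gramDet x y := by
  have hy : 0 < ⟪y, y⟫ := real_inner_self_pos.2 (h.ne_zero 1)
  have hv : ⟪y, y⟫ • x - ⟪x, y⟫ • y ≠ 0 := fun h0 ↦ hy.ne'
    (LinearIndependent.pair_iff.1 h _ (-⟪x, y⟫) (by rw [← h0]; module)).1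
  have hnorm : ⟪⟪y, y⟫ • x - ⟪x, y⟫ • y, ⟪y, y⟫ • x - ⟪x, y⟫ • y⟫ = ⟪y, y⟫ * gramDet x y := by
    simp only [gramDet, inner_sub_left, inner_sub_right, real_inner_smul_left,
      real_inner_smul_right, real_inner_comm x y]
    ring
  exact pos_of_mul_pos_right (hnorm ▸ real_inner_self_pos.2 hv) hy.le

lemma inner_mul_inner_eq_of_gramDet_eq {p q r : V}
    (h₁ : gramDet (q + r) (p + r) = gramDet (q + r) (p + q))
    (h₂ : gramDet (q + r) (p + r) = gramDet (p + r) (p + q))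
    (h₃ : gramDet (q + r) (p + r) = gramDet (p - q) (p - r)) :
    ⟪p, p⟫ * ⟪q, r⟫ = ⟪p, r⟫ * ⟪p, q⟫ ∧ ⟪q, q⟫ * ⟪p, r⟫ = ⟪q, r⟫ * ⟪p, q⟫ ∧
      ⟪r, r⟫ * ⟪p, q⟫ = ⟪q, r⟫ * ⟪p, r⟫ := by
  simp only [gramDet, inner_add_left, inner_add_right, inner_sub_left, inner_sub_right,
    real_inner_comm p q, real_inner_comm p r, real_inner_comm q r] at h₁ h₂ h₃ ⊢
  refine ⟨?_, ?_, ?_⟩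
  · linear_combination (h₂ + h₃ - h₁) / 8
  · linear_combination (h₃ - h₂ + h₁) / 8
  · linear_combination (h₃ - h₂ - h₁) / 8

lemma inner_eq_zero_of_gramDet_eq {p q r : V} (hlin : LinearIndependent ℝ ![p, q, r])
    (h₁ : gramDet (q + r) (p + r) = gramDet (q + r) (p + q))
    (h₂ : gramDet (q + r) (p + r) = gramDet (p + r) (p + q))
    (h₃ : gramDet (q + r) (p + r) = gramDet (p - q) (p - r)) :
    ⟪q, r⟫ = 0 ∧ ⟪p, r⟫ = 0 ∧ ⟪p, q⟫ = 0 := by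
  obtain ⟨e₁, e₂, e₃⟩ := inner_mul_inner_eq_of_gramDet_eq h₁ h₂ h₃
  have hqr : LinearIndependent ℝ ![q, r] := by
    have := hlin.comp ![1, 2] (by decide)
    rwa [show ![p, q, r] ∘ ![1, 2] = ![q, r] by ext i; fin_cases i <;> rfl] at this
  have hp : p ≠ 0 := hlin.ne_zero 0
  have hq : q ≠ 0 := hlin.ne_zero 1
  have hr : r ≠ 0 := hlin.ne_zero 2
  exact eq_zero_of_mul_eq_mul_cyclic (real_inner_self_pos.2 hp) (real_inner_self_pos.2 hq)
    (real_inner_self_pos.2 hr) (sub_pos.1 (gramDet_pos hqr)) e₁ e₂ e₃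

end GramDet

lemma AffineIndependent.linearIndependent_of_sub_eq {V : Type*} [AddCommGroup V] [Module ℝ V]
    {A B C D p q r : V} (hind : AffineIndependent ℝ ![A, B, C, D])
    (hB : B - A = q + r) (hC : C - A = p + r) (hD : D - A = p + q) :
    LinearIndependent ℝ ![p, q, r] := by
  obtain rfl := eq_add_of_sub_eq' hB
  obtain rfl := eq_add_of_sub_eq' hC
  obtain rfl := eq_add_of_sub_eq' hD
  rw [Fintype.linearIndependent_iff]
  intro g hg
  simp only [Fin.sum_univ_three, Matrix.cons_val] at hg
  -- `2 • (g 0 • p + g 1 • q + g 2 • r)` written as a combination of the vertices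
  have hw := hind.eq_zero_of_sum_eq_zero (s := Finset.univ)
    (w := ![-(g 0 + g 1 + g 2), g 1 + g 2 - g 0, g 0 + g 2 - g 1, g 0 + g 1 - g 2])
    (by simp only [Fin.sum_univ_four, Matrix.cons_val]; ring)
    (by
      simp only [Fin.sum_univ_four, Matrix.cons_val]
      linear_combination (norm := module) (2 : ℝ) • hg)
  have h₀ : -(g 0 + g 1 + g 2) = 0 := hw 0 (Finset.mem_univ _)
  have h₁ : g 1 + g 2 - g 0 = 0 := hw 1 (Finset.mem_univ _)
  have h₂ : g 0 + g 2 - g 1 = 0 := hw 2 (Finset.mem_univ _)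
  intro i
  fin_cases i <;> simp only [Fin.isValue, Fin.zero_eta, Fin.mk_one, Fin.reduceFinMk] <;> linarith

lemma triArea_eq_sqrt_gramDet (X Y Z : EuclideanSpace ℝ (Fin 3)) :
    triArea X Y Z = √(gramDet (Y - X) (Z - X)) / 2 := by
  rw [triArea, gramDet, ← InnerProductGeometry.sin_angle_mul_norm_mul_norm,
    EuclideanGeometry.angle, dist_eq_norm_vsub', dist_eq_norm_vsub']
  simp only [vsub_eq_sub]
  ring

lemma gramDet_eq_of_triArea_eq {X Y Z X' Y' Z' : EuclideanSpace ℝ (Fin 3)}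
    (h : triArea X Y Z = triArea X' Y' Z') :
    gramDet (Y - X) (Z - X) = gramDet (Y' - X') (Z' - X') := by
  rw [triArea_eq_sqrt_gramDet, triArea_eq_sqrt_gramDet, div_left_inj' two_ne_zero] at h
  exact (Real.sqrt_inj (gramDet_nonneg _ _) (gramDet_nonneg _ _)).1 h

theorem stmt_2 (A B C D : EuclideanSpace ℝ (Fin 3))
    (hind : AffineIndependent ℝ ![A, B, C, D])
    (h1 : triArea A B C = triArea A B D)
    (h2 : triArea A B C = triArea A C D)
    (h3 : triArea A B C = triArea B C D) :
    dist A B = dist C D ∧ dist A C = dist B D ∧ dist A D = dist B C := by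
  obtain ⟨p, q, r, hB, hC, hD⟩ : ∃ p q r : EuclideanSpace ℝ (Fin 3),
      B - A = q + r ∧ C - A = p + r ∧ D - A = p + q :=
    ⟨(2 : ℝ)⁻¹ • (C + D - A - B), (2 : ℝ)⁻¹ • (B + D - A - C), (2 : ℝ)⁻¹ • (B + C - A - D),
      by module, by module, by module⟩
  have hCB : C - B = p - q := by rw [← sub_sub_sub_cancel_right C B A, hB, hC]; abel
  have hDB : D - B = p - r := by rw [← sub_sub_sub_cancel_right D B A, hB, hD]; abel
  have hDC : D - C = q - r := by rw [← sub_sub_sub_cancel_right D C A, hC, hD]; abel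
  have g₁ := gramDet_eq_of_triArea_eq h1
  have g₂ := gramDet_eq_of_triArea_eq h2
  have g₃ := gramDet_eq_of_triArea_eq h3
  rw [hB, hC, hD] at g₁ g₂
  rw [hB, hC, hCB, hDB] at g₃
  obtain ⟨hqr, hpr, hpq⟩ :=
    inner_eq_zero_of_gramDet_eq (hind.linearIndependent_of_sub_eq hB hC hD) g₁ g₂ g₃
  simp only [dist_eq_norm', hB, hC, hD, hCB, hDB, hDC]
  rw [real_inner_comm] at hqr hpr hpq
  exact ⟨(norm_sub_eq_norm_add hqr).symm, (norm_sub_eq_norm_add hpr).symm,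
    (norm_sub_eq_norm_add hpq).symm⟩
end

section
/- Let A, B, C, D be four points in Euclidean 3-space such that the four triangles ABC, ABD, ACD, BCD all have the same area S > 0. Write a = dist B C, b = dist C A, c = dist A B. If (dist B D)² = 2a² − b² + 2c² and (dist C D)² = 2a² + 2b² − c², then a⁴ = (b² − c²)²; in particular the triangle ABC is right-angled, with b² = a² + c² or c² = a² + b². -/
/-!
Heron's formula in the form `16 S² = 4 x² y² - (x² + y² - z²)²` expresses the area of a
triangle through its squared sides. Applied to `ABC` and to `BCD`, whose squared sides are
`a², 2a² - b² + 2c², 2a² + 2b² - c²`, the two equal areas give, after cancellation,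
`8 a⁴ = 8 (b² - c²)²`.
-/

open EuclideanGeometry

theorem EuclideanGeometry.sixteen_mul_sq_half_area_eq {V P : Type*} [NormedAddCommGroup V]
    [InnerProductSpace ℝ V] [MetricSpace P] [NormedAddTorsor V P] (X Y Z : P) :
    16 * (dist X Y * dist X Z * Real.sin (∠ Y X Z) / 2) ^ 2 =
      4 * dist X Y ^ 2 * dist X Z ^ 2 - (dist X Y ^ 2 + dist X Z ^ 2 - dist Y Z ^ 2) ^ 2 := by
  have law := law_cos Y X Z
  rw [dist_comm Y X, dist_comm Z X] at law
  linear_combination 4 * dist X Y ^ 2 * dist X Z ^ 2 * Real.sin_sq_add_cos_sq (∠ Y X Z) +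
    (dist Y Z ^ 2 - dist X Y ^ 2 - dist X Z ^ 2 -
      2 * dist X Y * dist X Z * Real.cos (∠ Y X Z)) * law

theorem sixteen_mul_triArea_sq (X Y Z : EuclideanSpace ℝ (Fin 3)) :
    16 * triArea X Y Z ^ 2 =
      4 * dist X Y ^ 2 * dist X Z ^ 2 - (dist X Y ^ 2 + dist X Z ^ 2 - dist Y Z ^ 2) ^ 2 :=
  sixteen_mul_sq_half_area_eq X Y Z

theorem sq_eq_add_or_of_pow_four_eq {a b c : ℝ} (h : a ^ 4 = (b ^ 2 - c ^ 2) ^ 2) :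
    b ^ 2 = a ^ 2 + c ^ 2 ∨ c ^ 2 = a ^ 2 + b ^ 2 := by
  rcases sq_eq_sq_iff_eq_or_eq_neg.mp (show (a ^ 2) ^ 2 = (b ^ 2 - c ^ 2) ^ 2 by rw [← h]; ring)
    with h | h
  · left; linarith
  · right; linarith

theorem stmt_12_general (A B C D : EuclideanSpace ℝ (Fin 3)) (S a b c : ℝ)
    (ha : a = dist B C) (hb : b = dist C A) (hc : c = dist A B)
    (h1 : triArea A B C = S)
    (h4 : triArea B C D = S)
    (hy : (dist B D) ^ 2 = 2 * a ^ 2 - b ^ 2 + 2 * c ^ 2)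
    (hz : (dist C D) ^ 2 = 2 * a ^ 2 + 2 * b ^ 2 - c ^ 2) :
    a ^ 4 = (b ^ 2 - c ^ 2) ^ 2 ∧
      (b ^ 2 = a ^ 2 + c ^ 2 ∨ c ^ 2 = a ^ 2 + b ^ 2) := by
  have hABC := sixteen_mul_triArea_sq A B C
  have hBCD := sixteen_mul_triArea_sq B C D
  rw [h1, ← hc, dist_comm A C, ← hb, ← ha] at hABC
  rw [h4, ← ha, hy, hz] at hBCD
  have key : a ^ 4 = (b ^ 2 - c ^ 2) ^ 2 := by linear_combination (hABC - hBCD) / 8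
  exact ⟨key, sq_eq_add_or_of_pow_four_eq key⟩

theorem stmt_12 (A B C D : EuclideanSpace ℝ (Fin 3)) (S a b c : ℝ)
    (ha : a = dist B C) (hb : b = dist C A) (hc : c = dist A B)
    (hS : 0 < S)
    (h1 : triArea A B C = S) (h2 : triArea A B D = S)
    (h3 : triArea A C D = S) (h4 : triArea B C D = S)
    (hy : (dist B D) ^ 2 = 2 * a ^ 2 - b ^ 2 + 2 * c ^ 2)
    (hz : (dist C D) ^ 2 = 2 * a ^ 2 + 2 * b ^ 2 - c ^ 2) :
    a ^ 4 = (b ^ 2 - c ^ 2) ^ 2 ∧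
      (b ^ 2 = a ^ 2 + c ^ 2 ∨ c ^ 2 = a ^ 2 + b ^ 2) :=
  stmt_12_general A B C D S a b c ha hb hc h1 h4 hy hz
end

section
/- Let A, B, C, D be four points in Euclidean 3-space such that the four triangles ABC, ABD, ACD, BCD all have the same area S > 0. Write a = dist B C, b = dist C A, c = dist A B. If dist A D = a, dist B D = b, and dist C D ≠ c, then the four points are coplanar and form a parallelogram with vertices in cyclic order D, B, C, A: the midpoint of the segment DC equals the midpoint of the segment AB, the parallelogram has side lengths a and b, and its diagonals have lengths c and √(2a² + 2b² − c²). -/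
open InnerProductGeometry RealInnerProductSpace

section InnerProductSpace

variable {V : Type*} [NormedAddCommGroup V] [InnerProductSpace ℝ V]

theorem sq_sin_angle_mul_norm_mul_norm (x y : V) :
    (Real.sin (angle x y) * (‖x‖ * ‖y‖)) ^ 2 = ‖x‖ ^ 2 * ‖y‖ ^ 2 - ⟪x, y⟫ ^ 2 := by
  rw [sin_angle_mul_norm_mul_norm, Real.sq_sqrt (sub_nonneg.2 (real_inner_mul_inner_self_le x y)),
    real_inner_self_eq_norm_sq, real_inner_self_eq_norm_sq]
  ring

theorem norm_sub_eq_or_eq_sub_of_gram_eq {p q r : V} (hr : ‖r‖ = ‖q - p‖) (hrp : ‖r - p‖ = ‖q‖)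
    (hgram : ‖p‖ ^ 2 * ‖q‖ ^ 2 - ⟪p, q⟫ ^ 2 = ‖q‖ ^ 2 * ‖r‖ ^ 2 - ⟪q, r⟫ ^ 2) :
    ‖r - q‖ = ‖p‖ ∨ r = p - q := by
  have hr2 : ‖r‖ ^ 2 = ‖q‖ ^ 2 - 2 * ⟪p, q⟫ + ‖p‖ ^ 2 := by
    rw [hr, norm_sub_sq_real, real_inner_comm]
  have hroots : (⟪q, r⟫ - (‖q‖ ^ 2 - ⟪p, q⟫)) * (⟪q, r⟫ + (‖q‖ ^ 2 - ⟪p, q⟫)) = 0 := by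
    linear_combination hgram + ‖q‖ ^ 2 * hr2
  rcases mul_eq_zero.1 hroots with h | h
  · left
    refine (sq_eq_sq₀ (norm_nonneg _) (norm_nonneg _)).1 ?_
    rw [norm_sub_sq_real, real_inner_comm]
    linear_combination hr2 - 2 * h
  · right
    have hsq : ‖r - p + q‖ ^ 2 = 0 := by
      rw [norm_add_sq_real, hrp, inner_sub_left, real_inner_comm q r]
      linear_combination 2 * h
    have hzero := norm_eq_zero.1 (pow_eq_zero_iff two_ne_zero |>.1 hsq)
    rw [← sub_eq_zero, ← hzero]; abel

theorem dist_eq_or_add_eq_add_of_gram_eq {A B C D : V} (hAD : dist A D = dist B C)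
    (hBD : dist B D = dist C A)
    (hgram : ‖B - A‖ ^ 2 * ‖C - A‖ ^ 2 - ⟪B - A, C - A⟫ ^ 2 =
      ‖C - A‖ ^ 2 * ‖D - A‖ ^ 2 - ⟪C - A, D - A⟫ ^ 2) :
    dist C D = dist A B ∨ D + C = A + B := by
  have hr : ‖D - A‖ = ‖C - A - (B - A)‖ := by
    rw [sub_sub_sub_cancel_right, ← dist_eq_norm', ← dist_eq_norm', hAD]
  have hrp : ‖D - A - (B - A)‖ = ‖C - A‖ := by
    rw [sub_sub_sub_cancel_right, ← dist_eq_norm', ← dist_eq_norm, hBD]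
  rcases norm_sub_eq_or_eq_sub_of_gram_eq hr hrp hgram with h | h
  · left
    rwa [sub_sub_sub_cancel_right, ← dist_eq_norm', ← dist_eq_norm'] at h
  · right
    rw [sub_sub_sub_cancel_right, sub_eq_sub_iff_add_eq_add] at h
    exact h.trans (add_comm B A)

theorem dist_sq_add_dist_sq_of_add_eq_add {A B C D : V} (h : D + C = A + B) :
    dist D C ^ 2 + dist A B ^ 2 = 2 * (dist A D ^ 2 + dist C A ^ 2) := by
  have hDAC : D - A + (C - A) = B - A := by rw [← sub_eq_zero, ← sub_eq_zero.2 h]; abel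
  rw [dist_eq_norm, dist_eq_norm', dist_eq_norm', dist_eq_norm, ← hDAC,
    ← sub_sub_sub_cancel_right D C A, add_comm, parallelogram_law_with_norm ℝ]

end InnerProductSpace

theorem coplanar_of_add_eq_add {k V : Type*} [DivisionRing k] [AddCommGroup V] [Module k V]
    {A B C D : V} (h : D + C = A + B) : Coplanar k ({A, B, C, D} : Set V) := by
  have hD : D = (A -ᵥ C) +ᵥ B := by
    rw [vsub_eq_sub, vadd_eq_add, ← sub_eq_zero, ← sub_eq_zero.2 h]; abel
  have hD_mem : D ∈ affineSpan k ({A, B, C} : Set V) := by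
    rw [hD]
    refine AffineSubspace.vadd_mem_of_mem_direction ?_ (subset_affineSpan k _ (by simp))
    rw [direction_affineSpan]
    exact vsub_mem_vectorSpan k (by simp) (by simp)
  rw [Set.pair_comm C D, Set.insert_comm B D, Set.insert_comm A D,
    coplanar_insert_iff_of_mem_affineSpan hD_mem]
  exact coplanar_triple k A B C

theorem four_mul_triArea_sq (X Y Z : EuclideanSpace ℝ (Fin 3)) :
    4 * triArea X Y Z ^ 2 = ‖Y - X‖ ^ 2 * ‖Z - X‖ ^ 2 - ⟪Y - X, Z - X⟫ ^ 2 := by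
  rw [triArea, EuclideanGeometry.angle, vsub_eq_sub, vsub_eq_sub, dist_eq_norm', dist_eq_norm',
    ← sq_sin_angle_mul_norm_mul_norm]
  ring

theorem stmt_14_general (A B C D : EuclideanSpace ℝ (Fin 3)) (S a b c : ℝ)
    (ha : a = dist B C) (hb : b = dist C A) (hc : c = dist A B)
    (h1 : triArea A B C = S)
    (h3 : triArea A C D = S)
    (hx : dist A D = a) (hy : dist B D = b) (hz : dist C D ≠ c) :
    Coplanar ℝ ({A, B, C, D} : Set (EuclideanSpace ℝ (Fin 3))) ∧
      midpoint ℝ D C = midpoint ℝ A B ∧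
      dist D B = b ∧ dist B C = a ∧ dist C A = b ∧ dist A D = a ∧
      dist A B = c ∧ dist D C = Real.sqrt (2 * a ^ 2 + 2 * b ^ 2 - c ^ 2) := by
  have hgram := four_mul_triArea_sq A B C
  rw [h1, ← h3, four_mul_triArea_sq] at hgram
  have hpar : D + C = A + B :=
    (dist_eq_or_add_eq_add_of_gram_eq (hx.trans ha) (hy.trans hb) hgram.symm).resolve_left
      (hc ▸ hz)
  refine ⟨coplanar_of_add_eq_add hpar, ?_, ?_, ha.symm, hb.symm, hx, hc.symm, ?_⟩
  · rw [midpoint_eq_smul_add, midpoint_eq_smul_add, hpar]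
  · rw [dist_eq_norm, sub_eq_sub_iff_add_eq_add.2 hpar, ← dist_eq_norm, dist_comm, hb]
  · have hlaw := dist_sq_add_dist_sq_of_add_eq_add hpar
    rw [hx, ← hb, ← hc] at hlaw
    rw [← Real.sqrt_sq dist_nonneg]
    congr 1
    linarith

theorem stmt_14 (A B C D : EuclideanSpace ℝ (Fin 3)) (S a b c : ℝ)
    (ha : a = dist B C) (hb : b = dist C A) (hc : c = dist A B)
    (hS : 0 < S)
    (h1 : triArea A B C = S) (h2 : triArea A B D = S)
    (h3 : triArea A C D = S) (h4 : triArea B C D = S)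
    (hx : dist A D = a) (hy : dist B D = b) (hz : dist C D ≠ c) :
    Coplanar ℝ ({A, B, C, D} : Set (EuclideanSpace ℝ (Fin 3))) ∧
      midpoint ℝ D C = midpoint ℝ A B ∧
      dist D B = b ∧ dist B C = a ∧ dist C A = b ∧ dist A D = a ∧
      dist A B = c ∧ dist D C = Real.sqrt (2 * a ^ 2 + 2 * b ^ 2 - c ^ 2) :=
  stmt_14_general A B C D S a b c ha hb hc h1 h3 hx hy hz
end
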